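/- Let H be a hypergraph with vertices v_1,…,v_n and hyperedges e_1,…,e_m, and let Ω be its nilpotent hypergraph adjacency matrix with entries in 𝔷_n ⊗ 𝔦_m. Then for every integer k ≥ 1 and all indices 1 ≤ i ≠ j ≤ n, one has ζ_i · (Ω^k)_{ij} = Σ_{I,J} ω_{I,J} · ζ_I ⊗ ε_J, where the sum is over pairs of subsets I ⊆ {1,…,n} with |I| = k+1 and J ⊆ {1,…,m}, and ω_{I,J} is the number of k-paths in H from v_i to v_j whose set of visited vertices is {v_t : t ∈ I} and whose set of traversed hyperedges is {e_ℓ : ℓ ∈ J}. -/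

import Mathlib

open Finset

/-- Regular-representation action of the zeon blade `ζ_I` (product of the zeon generators
`ζ_i`, `i ∈ I`, satisfying `ζ_i ^ 2 = 0`) on the coefficient space of the algebra
`𝔷 ⊗ 𝔦`:  a multiplication by `ζ_I` sends the basis blade indexed by `(S, T)` to the one
indexed by `(I ∪ S, T)` when `I` and `S` are disjoint, and to `0` otherwise. -/
noncomputable def zetaBlade (α γ : Type*) [DecidableEq α] (I : Finset α) :
    Module.End ℝ ((Finset α × γ) → ℝ) where
  toFun c := fun p => if I ⊆ p.1 then c (p.1 \ I, p.2) else 0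
  map_add' x y := by
    funext p
    by_cases h : I ⊆ p.1 <;> simp [h]
  map_smul' r x := by
    funext p
    by_cases h : I ⊆ p.1 <;> simp [h]

/-- Regular-representation action of the idem-Clifford blade `ε_J` (product of the
idempotent generators `ε_j`, `j ∈ J`, satisfying `ε_j ^ 2 = ε_j`) on the coefficient
space: multiplication by `ε_J` sends the basis blade indexed by `(S, T)` to the one
indexed by `(S, T ∪ J)`. -/
noncomputable def epsBlade (γ β : Type*) [DecidableEq β] (J : Finset β) :
    Module.End ℝ ((γ × Finset β) → ℝ) where
  toFun c := fun p => ∑ T ∈ p.2.powerset.filter (fun T => T ∪ J = p.2), c (p.1, T)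
  map_add' x y := by
    funext p
    simp [Finset.sum_add_distrib]
  map_smul' r x := by
    funext p
    simp [Finset.mul_sum]

/-- The nilpotent hypergraph adjacency matrix `Ω = X Z` of the hypergraph on vertices
`Fin n` whose hyperedges are `E 0, …, E (m-1)`:  `X i ℓ = ε_ℓ` if `v_i ∈ e_ℓ`
(and `0` otherwise), `Z ℓ j = ζ_j` if `v_j ∈ e_ℓ` (and `0` otherwise). -/
noncomputable def Omega {n m : ℕ} (E : Fin m → Finset (Fin n)) :
    Matrix (Fin n) (Fin n)
      (Module.End ℝ ((Finset (Fin n) × Finset (Fin m)) → ℝ)) :=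
  (Matrix.of fun (i : Fin n) (l : Fin m) =>
      if i ∈ E l then epsBlade (Finset (Fin n)) (Fin m) {l} else 0) *
  (Matrix.of fun (l : Fin m) (j : Fin n) =>
      if j ∈ E l then zetaBlade (Fin n) (Finset (Fin m)) {j} else 0)

/-- A `k`-walk in the hypergraph with hyperedges `E`: consecutive vertices are distinct
and both belong to the hyperedge used at that step. -/
def IsWalk {n m : ℕ} (E : Fin m → Finset (Fin n)) {k : ℕ}
    (vs : Fin (k + 1) → Fin n) (es : Fin k → Fin m) : Prop :=
  ∀ t : Fin k, vs t.castSucc ≠ vs t.succ ∧ vs t.castSucc ∈ E (es t) ∧ vs t.succ ∈ E (es t)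

/-! A product of blades `ζ_{I₁} ε_{J₁} ⋯ ζ_{I_r} ε_{J_r}` equals `ζ_{⋃ I} ε_{⋃ J}` when the
`I`'s are pairwise disjoint and vanishes otherwise. Expanding `ζ_i (Ωᵏ)_{ij}` along
`Ω^{k+1} = Ω Ωᵏ` therefore produces one blade `ζ_{vertices} ε_{hyperedges}` for each `k`-path
from `v_i` to `v_j`: prepending a step `v_i → v_a` inside `e_ℓ` to a path starting at `v_a`
multiplies its blade by `ζ_i ε_ℓ`, which kills it exactly when the path already visits `v_i`.
Grouping the paths by their vertex and hyperedge sets yields the coefficients `ω_{I,J}`. -/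

theorem sum_fun_fin_succ {X M : Type*} [Fintype X] [AddCommMonoid M] {k : ℕ}
    (F : (Fin (k + 1) → X) → M) :
    ∑ vs, F vs = ∑ a, ∑ w : Fin k → X, F (Fin.cons a w) := by
  rw [← (Fin.consEquiv fun _ => X).sum_comp, Fintype.sum_prod_type]
  rfl

theorem image_fin_cons {X : Type*} [DecidableEq X] {k : ℕ} (a : X) (w : Fin k → X) :
    Finset.univ.image (Fin.cons a w : Fin (k + 1) → X) = insert a (Finset.univ.image w) := by
  ext x
  simp [Fin.exists_fin_succ, eq_comm]

theorem sum_comp_eq_sum_natCard_fiber_smul {α β M : Type*} [Fintype α] [DecidableEq β]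
    [AddCommMonoid M] (p : α → Prop) [DecidablePred p] (g : α → β) (s : Finset β)
    (hg : ∀ a, p a → g a ∈ s) (f : β → M) :
    ∑ a with p a, f (g a) = ∑ b ∈ s, Nat.card {a // p a ∧ g a = b} • f b := by
  rw [← Finset.sum_fiberwise_of_maps_to fun a ha => hg a (Finset.mem_filter.mp ha).2]
  refine Finset.sum_congr rfl fun b _ => ?_
  rw [Finset.sum_congr rfl fun a ha => congrArg f (Finset.mem_filter.mp ha).2, Finset.sum_const,
    Finset.filter_filter, Nat.card_eq_fintype_card, Fintype.card_subtype]

section Blades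

variable {α β γ : Type*} [DecidableEq α] [DecidableEq β]

theorem zetaBlade_apply (I S : Finset α) (c : Finset α × γ → ℝ) (T : γ) :
    zetaBlade α γ I c (S, T) = if I ⊆ S then c (S \ I, T) else 0 := rfl

theorem epsBlade_apply (J : Finset β) (c : γ × Finset β → ℝ) (S : γ) (T : Finset β) :
    epsBlade γ β J c (S, T) = ∑ U ∈ T.powerset with U ∪ J = T, c (S, U) := rfl

theorem zetaBlade_mul (I I' : Finset α) :
    zetaBlade α γ I * zetaBlade α γ I' =
      if Disjoint I I' then zetaBlade α γ (I ∪ I') else 0 := by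
  ext c ⟨S, T⟩
  simp only [Module.End.mul_apply, zetaBlade_apply, ← ite_and]
  by_cases hd : Disjoint I I'
  · have hsub : I ⊆ S ∧ I' ⊆ S \ I ↔ I ∪ I' ⊆ S := by
      rw [Finset.subset_sdiff, Finset.union_subset_iff]
      exact ⟨fun h => ⟨h.1, h.2.1⟩, fun h => ⟨h.1, h.2, hd.symm⟩⟩
    simp only [if_pos hd, zetaBlade_apply, hsub, sdiff_sdiff_left, Finset.sup_eq_union]
  · have hsub : ¬(I ⊆ S ∧ I' ⊆ S \ I) := fun h =>
      hd (Finset.subset_sdiff.mp h.2).2.symm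
    simp only [if_neg hd, hsub, if_false, LinearMap.zero_apply, Pi.zero_apply]

theorem epsBlade_mul (J J' : Finset β) :
    epsBlade γ β J * epsBlade γ β J' = epsBlade γ β (J ∪ J') := by
  ext c ⟨S, T⟩
  simp only [Module.End.mul_apply, epsBlade_apply]
  rw [Finset.sum_comm' (t' := {V ∈ T.powerset | V ∪ (J ∪ J') = T}) (s' := fun V => {V ∪ J'})]
  · simp
  · intro U V
    simp only [Finset.mem_filter, Finset.mem_powerset, Finset.mem_singleton]
    constructor
    · rintro ⟨⟨-, rfl⟩, hVU, rfl⟩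
      exact ⟨rfl, hVU.trans Finset.subset_union_left, by
        rw [Finset.union_right_comm, Finset.union_assoc]⟩
    · rintro ⟨rfl, -, rfl⟩
      refine ⟨⟨Finset.union_subset_union_right Finset.subset_union_right, ?_⟩,
        Finset.subset_union_left, rfl⟩
      rw [Finset.union_assoc, Finset.union_comm J']

theorem epsBlade_empty : epsBlade γ β ∅ = 1 := by
  ext c ⟨S, T⟩
  simp [epsBlade_apply, Finset.filter_eq']

theorem zetaBlade_commute_epsBlade (I : Finset α) (J : Finset β) :
    Commute (zetaBlade α (Finset β) I) (epsBlade (Finset α) β J) := by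
  ext c ⟨S, T⟩
  simp only [Module.End.mul_apply, zetaBlade_apply, epsBlade_apply]
  split_ifs <;> simp [*]

noncomputable def blade (I : Finset α) (J : Finset β) : Module.End ℝ (Finset α × Finset β → ℝ) :=
  zetaBlade α (Finset β) I * epsBlade (Finset α) β J

theorem blade_mul (I I' : Finset α) (J J' : Finset β) :
    blade I J * blade I' J' = if Disjoint I I' then blade (I ∪ I') (J ∪ J') else 0 := by
  rw [blade, blade, (zetaBlade_commute_epsBlade I' J).symm.mul_mul_mul_comm, zetaBlade_mul,
    epsBlade_mul]
  split_ifs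
  · rfl
  · exact zero_mul _

theorem blade_singleton_mul (a : α) (b : β) (I : Finset α) (J : Finset β) :
    blade {a} {b} * blade I J = if a ∈ I then 0 else blade (insert a I) (insert b J) := by
  simp only [blade_mul, Finset.disjoint_singleton_left, ← Finset.insert_eq, ite_not]

end Blades

section Paths

variable {n m : ℕ} (E : Fin m → Finset (Fin n))

theorem Omega_apply (i j : Fin n) :
    Omega E i j = ∑ l, if i ∈ E l ∧ j ∈ E l then
      epsBlade (Finset (Fin n)) (Fin m) {l} * zetaBlade (Fin n) (Finset (Fin m)) {j} else 0 := by
  simp only [Omega, Matrix.mul_apply, Matrix.of_apply, ite_zero_mul_ite_zero]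

def IsPath (i j : Fin n) {k : ℕ} (vs : Fin (k + 1) → Fin n) (es : Fin k → Fin m) : Prop :=
  IsWalk E vs es ∧ vs 0 = i ∧ vs (Fin.last k) = j ∧ Function.Injective vs

instance (i j : Fin n) {k : ℕ} (vs : Fin (k + 1) → Fin n) (es : Fin k → Fin m) :
    Decidable (IsPath E i j vs es) := by
  unfold IsPath IsWalk
  infer_instance

variable {E}

theorem isWalk_cons_iff {k : ℕ} {a : Fin n} {vs : Fin (k + 1) → Fin n} {l : Fin m}
    {es : Fin k → Fin m} :
    IsWalk E (Fin.cons a vs) (Fin.cons l es) ↔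
      (a ≠ vs 0 ∧ a ∈ E l ∧ vs 0 ∈ E l) ∧ IsWalk E vs es := by
  simp [IsWalk, Fin.forall_fin_succ]

theorem isPath_cons_iff {k : ℕ} {i j a : Fin n} {vs : Fin (k + 1) → Fin n} {l : Fin m}
    {es : Fin k → Fin m} :
    IsPath E i j (Fin.cons a vs) (Fin.cons l es) ↔
      a = i ∧ (i ∈ E l ∧ vs 0 ∈ E l) ∧ i ∉ Set.range vs ∧ IsPath E (vs 0) j vs es := by
  simp only [IsPath, isWalk_cons_iff, Fin.cons_zero, Fin.cons_injective_iff, ← Fin.succ_last,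
    Fin.cons_succ, true_and]
  constructor
  · rintro ⟨⟨⟨-, hal, h0l⟩, hw⟩, rfl, hlast, hrange, hinj⟩
    exact ⟨rfl, ⟨hal, h0l⟩, hrange, hw, hlast, hinj⟩
  · rintro ⟨rfl, ⟨hal, h0l⟩, hrange, hw, hlast, hinj⟩
    exact ⟨⟨⟨fun h => hrange ⟨0, h.symm⟩, hal, h0l⟩, hw⟩, rfl, hlast, hrange, hinj⟩

theorem zetaBlade_mul_Omega_apply_mul (i a : Fin n)
    (X : Module.End ℝ (Finset (Fin n) × Finset (Fin m) → ℝ)) :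
    zetaBlade (Fin n) (Finset (Fin m)) {i} * (Omega E i a * X) =
      ∑ l, (if i ∈ E l ∧ a ∈ E l then blade {i} {l} else 0) *
        (zetaBlade (Fin n) (Finset (Fin m)) {a} * X) := by
  simp only [Omega_apply, Finset.sum_mul, Finset.mul_sum]
  refine Finset.sum_congr rfl fun l _ => ?_
  split_ifs <;> simp [blade, mul_assoc]

theorem zetaBlade_mul_Omega_pow_apply (k : ℕ) (i j : Fin n) :
    zetaBlade (Fin n) (Finset (Fin m)) {i} * (Omega E ^ k) i j =
      ∑ vs : Fin (k + 1) → Fin n, ∑ es : Fin k → Fin m,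
        if IsPath E i j vs es then blade (Finset.univ.image vs) (Finset.univ.image es) else 0 := by
  induction k generalizing i with
  | zero =>
    rw [sum_fun_fin_succ]
    simp [IsPath, IsWalk, Matrix.one_apply, Function.injective_of_subsingleton, blade,
      epsBlade_empty, ite_and]
  | succ k ih =>
    rw [pow_succ', Matrix.mul_apply, Finset.mul_sum]
    simp only [zetaBlade_mul_Omega_apply_mul, ih, Finset.mul_sum, ite_zero_mul_ite_zero,
      sum_fun_fin_succ (X := Fin m)]
    rw [sum_fun_fin_succ]
    -- Both sides become sums over `(ℓ, w, f)`: on the right the first vertex must be `i`,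
    -- on the left the tail path must start at `a = w 0`.
    conv_rhs =>
      rw [Fintype.sum_eq_single i fun b hb => by simp [isPath_cons_iff, hb], Finset.sum_comm]
    rw [Finset.sum_comm]
    refine Finset.sum_congr rfl fun l _ => ?_
    rw [Finset.sum_comm]
    refine Finset.sum_congr rfl fun w _ => ?_
    rw [Finset.sum_comm]
    refine Finset.sum_congr rfl fun f _ => ?_
    rw [Fintype.sum_eq_single (w 0) fun a ha => if_neg fun h => ha h.2.2.1.symm]
    simp only [isPath_cons_iff, image_fin_cons, blade_singleton_mul, Finset.coe_image,
      ← Finset.mem_coe, Finset.coe_univ, Set.image_univ]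
    by_cases hi : i ∈ Set.range w <;> simp [hi]

end Paths

theorem zeon_hypergraph_path_enumeration_general {n m : ℕ} (E : Fin m → Finset (Fin n))
    (k : ℕ) (i j : Fin n) :
    zetaBlade (Fin n) (Finset (Fin m)) {i} * ((Omega E) ^ k) i j =
      ∑ I ∈ (Finset.univ : Finset (Fin n)).powersetCard (k + 1),
        ∑ J ∈ (Finset.univ : Finset (Fin m)).powerset,
          (Nat.card {w : (Fin (k + 1) → Fin n) × (Fin k → Fin m) //
              IsWalk E w.1 w.2 ∧ w.1 0 = i ∧ w.1 (Fin.last k) = j ∧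
              Function.Injective w.1 ∧
              Finset.image w.1 Finset.univ = I ∧ Finset.image w.2 Finset.univ = J}) •
            (zetaBlade (Fin n) (Finset (Fin m)) I * epsBlade (Finset (Fin n)) (Fin m) J) := by
  have hsize : ∀ w : (Fin (k + 1) → Fin n) × (Fin k → Fin m), IsPath E i j w.1 w.2 →
      (Finset.univ.image w.1, Finset.univ.image w.2) ∈
        Finset.univ.powersetCard (k + 1) ×ˢ Finset.univ.powerset := fun w hw => by
    simp [Finset.card_image_of_injective _ hw.2.2.2]
  rw [zetaBlade_mul_Omega_pow_apply, ← Fintype.sum_prod_type', ← Finset.sum_filter,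
    sum_comp_eq_sum_natCard_fiber_smul _ _ _ hsize (fun x => blade x.1 x.2), Finset.sum_product]
  simp only [IsPath, Prod.mk.injEq, and_assoc]
  rfl

/-- For a hypergraph `H` with `n` vertices and `m` (nonempty) hyperedges,
for every `k ≥ 1` and `i ≠ j`,
`ζ_i · (Ω^k)_{ij} = Σ_{I,J} ω_{I,J} ζ_I ε_J`, the sum being over subsets `I` of the
vertex set with `|I| = k + 1` and subsets `J` of the hyperedge index set, where
`ω_{I,J}` is the number of `k`-paths from `v_i` to `v_j` with visited vertex set `I`
and traversed hyperedge set `J`. -/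
theorem zeon_hypergraph_path_enumeration {n m : ℕ} (E : Fin m → Finset (Fin n))
    (hE : ∀ l : Fin m, (E l).Nonempty)
    (k : ℕ) (hk : 1 ≤ k) (i j : Fin n) (hij : i ≠ j) :
    zetaBlade (Fin n) (Finset (Fin m)) {i} * ((Omega E) ^ k) i j =
      ∑ I ∈ (Finset.univ : Finset (Fin n)).powersetCard (k + 1),
        ∑ J ∈ (Finset.univ : Finset (Fin m)).powerset,
          (Nat.card {w : (Fin (k + 1) → Fin n) × (Fin k → Fin m) //
              IsWalk E w.1 w.2 ∧ w.1 0 = i ∧ w.1 (Fin.last k) = j ∧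
              Function.Injective w.1 ∧
              Finset.image w.1 Finset.univ = I ∧ Finset.image w.2 Finset.univ = J}) •
            (zetaBlade (Fin n) (Finset (Fin m)) I * epsBlade (Finset (Fin n)) (Fin m) J) :=
  zeon_hypergraph_path_enumeration_general E k i j
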